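/- There do not exist a positive-edge-weighted tree T with four distinguished leaves a, b, c, d and reals 0 ≤ d_min ≤ d_max such that: d_min ≤ d_T(a,b) ≤ d_max, d_min ≤ d_T(c,d) ≤ d_max, d_T(a,c) < d_min, d_T(a,d) < d_min, d_T(b,c) < d_min, and d_T(b,d) < d_min. (Forbidden coloring f-c(2K_2)a: a 2K_2 with all four non-edges red is not realizable.) -/

import Mathlib

open SimpleGraph

/-- A tree with positive real edge weights. -/
structure WTree (α : Type) where
  g : SimpleGraph α
  isTree : g.IsTree
  w : α → α → ℝ
  w_symm : ∀ a b, w a b = w b a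
  w_pos : ∀ a b, g.Adj a b → 0 < w a b

/-- The weighted distance between two vertices of a weighted tree: the sum of
the weights of the edges on the unique path between them. -/
noncomputable def WTree.dist {α : Type} (T : WTree α) (u v : α) : ℝ :=
  (((T.isTree.existsUnique_path u v).exists.choose).darts.map
    (fun d => T.w d.toProd.1 d.toProd.2)).sum

/-- A vertex of a weighted tree is a leaf if it has exactly one neighbor. -/
def WTree.IsLeaf {α : Type} (T : WTree α) (v : α) : Prop :=
  ∃! u, T.g.Adj v u

/-- `G = PCG(T, dmin, dmax)` via the leaf-assignment `f`. -/
def IsPCGWith {V β : Type} (G : SimpleGraph V) (T : WTree β) (f : V → β)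
    (dmin dmax : ℝ) : Prop :=
  Function.Injective f ∧ (∀ v, T.IsLeaf (f v)) ∧ (∀ b, T.IsLeaf b → ∃ v, f v = b) ∧
    ∀ u v : V, u ≠ v →
      (G.Adj u v ↔ dmin ≤ T.dist (f u) (f v) ∧ T.dist (f u) (f v) ≤ dmax)

/-- A graph is a pairwise compatibility graph. -/
def IsPCG {V : Type} (G : SimpleGraph V) : Prop :=
  ∃ (β : Type) (T : WTree β) (f : V → β) (dmin dmax : ℝ),
    0 ≤ dmin ∧ dmin ≤ dmax ∧ IsPCGWith G T f dmin dmax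

/-
Tree distances satisfy the four-point condition
`d(a,b) + d(c,d) ≤ max (d(a,c) + d(b,d)) (d(a,d) + d(b,c))`; here the left side is at least
`2 dmin` and both sums on the right are below `2 dmin`. The four-point condition comes from
projecting `c` and `d` to vertices `m`, `n` of the `a`–`b` path: then
`d(c,d) ≤ d(c,m) + d(m,n) + d(n,d)`, while for `m`, `n` on the path it holds with equality.
-/

namespace SimpleGraph.Walk

variable {V : Type*} {G : SimpleGraph V}

theorem IsPath.append {u v w : V} {p : G.Walk u v} {q : G.Walk v w} (hp : p.IsPath)
    (hq : q.IsPath) (h : ∀ x ∈ p.support, x ∈ q.support → x = v) : (p.append q).IsPath := by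
  have hq' := hq.support_nodup
  rw [← cons_tail_support, List.nodup_cons] at hq'
  rw [isPath_def, support_append, List.nodup_append]
  refine ⟨hp.support_nodup, hq'.2, fun x hx y hy hxy => ?_⟩
  subst hxy
  have hxv : x = v := h x hx (List.mem_of_mem_tail hy)
  exact hq'.1 (hxv ▸ hy)

theorem exists_isPath_to_first_mem {S : Set V} {c z : V} (q : G.Walk c z) (hz : z ∈ S) :
    ∃ m ∈ S, ∃ r : G.Walk c m, r.IsPath ∧ ∀ x ∈ r.support, x ∈ S → x = m := by
  classical
  suffices ∃ m ∈ S, ∃ r : G.Walk c m, ∀ x ∈ r.support, x ∈ S → x = m by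
    obtain ⟨m, hm, r, hr⟩ := this
    exact ⟨m, hm, r.bypass, r.bypass_isPath,
      fun x hx => hr x (r.support_bypass_subset_support hx)⟩
  induction q with
  | nil => exact ⟨_, hz, nil, by simp⟩
  | @cons s t z hadj q ih =>
    by_cases hs : s ∈ S
    · exact ⟨s, hs, nil, by simp⟩
    · obtain ⟨m, hm, r, hr⟩ := ih hz
      refine ⟨m, hm, cons hadj r, fun x hx hxS => ?_⟩
      rcases List.mem_cons.mp (support_cons hadj r ▸ hx) with rfl | hx
      · exact absurd hxS hs
      · exact hr x hx hxS

end SimpleGraph.Walk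

namespace WTree

variable {α : Type} (T : WTree α)

noncomputable def weight {u v : α} (p : T.g.Walk u v) : ℝ :=
  (p.darts.map fun d => T.w d.toProd.1 d.toProd.2).sum

theorem weight_append {u v x : α} (p : T.g.Walk u v) (q : T.g.Walk v x) :
    T.weight (p.append q) = T.weight p + T.weight q := by
  simp [weight, Walk.darts_append]

theorem weight_reverse {u v : α} (p : T.g.Walk u v) : T.weight p.reverse = T.weight p := by
  simp only [weight, Walk.darts_reverse, List.map_reverse, List.sum_reverse, List.map_map]
  congr 1
  exact List.map_congr_left fun d _ => T.w_symm _ _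

theorem dist_eq_weight {u v : α} {p : T.g.Walk u v} (hp : p.IsPath) : T.dist u v = T.weight p :=
  congrArg T.weight <| (T.isTree.existsUnique_path u v).unique
    (T.isTree.existsUnique_path u v).exists.choose_spec hp

theorem dist_comm (u v : α) : T.dist u v = T.dist v u := by
  obtain ⟨p, hp⟩ := (T.isTree.existsUnique_path u v).exists
  rw [T.dist_eq_weight hp, T.dist_eq_weight hp.reverse, weight_reverse]

theorem dist_le_weight {u v : α} (p : T.g.Walk u v) : T.dist u v ≤ T.weight p := by
  classical
  rw [T.dist_eq_weight p.bypass_isPath]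
  refine (p.darts_bypass_sublist_darts.map _).sum_le_sum fun x hx => ?_
  obtain ⟨d, -, rfl⟩ := List.mem_map.mp hx
  exact (T.w_pos _ _ d.adj).le

theorem dist_triangle (u x v : α) : T.dist u v ≤ T.dist u x + T.dist x v := by
  obtain ⟨p, hp⟩ := (T.isTree.existsUnique_path u x).exists
  obtain ⟨q, hq⟩ := (T.isTree.existsUnique_path x v).exists
  calc T.dist u v ≤ T.weight (p.append q) := T.dist_le_weight _
    _ = T.dist u x + T.dist x v := by rw [weight_append, T.dist_eq_weight hp, T.dist_eq_weight hq]

theorem dist_eq_add_of_support_inter {u m v : α} {p : T.g.Walk u m} {q : T.g.Walk m v}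
    (hp : p.IsPath) (hq : q.IsPath) (h : ∀ x ∈ p.support, x ∈ q.support → x = m) :
    T.dist u v = T.dist u m + T.dist m v := by
  rw [T.dist_eq_weight (hp.append hq h), weight_append, T.dist_eq_weight hp, T.dist_eq_weight hq]

theorem dist_add_dist_of_mem_support {u v x : α} {p : T.g.Walk u v} (hp : p.IsPath)
    (hx : x ∈ p.support) : T.dist u x + T.dist x v = T.dist u v := by
  classical
  rw [T.dist_eq_weight (hp.takeUntil hx), T.dist_eq_weight (hp.dropUntil hx),
    T.dist_eq_weight hp, ← weight_append, p.take_spec hx]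

/-- `m` is the first vertex of `p` reached from `c`; gluing at `m` gives paths from both ends
of `p` to `c`. -/
theorem exists_projection {u v : α} {p : T.g.Walk u v} (hp : p.IsPath) (c : α) :
    ∃ m ∈ p.support, T.dist u c = T.dist u m + T.dist m c ∧
      T.dist v c = T.dist v m + T.dist m c := by
  classical
  obtain ⟨q, -⟩ := (T.isTree.existsUnique_path c u).exists
  obtain ⟨m, hm, r, hr, hfirst⟩ :=
    q.exists_isPath_to_first_mem (S := {x | x ∈ p.support}) p.start_mem_support
  have hfirst' : ∀ x ∈ r.reverse.support, x ∈ p.support → x = m := fun x hx =>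
    hfirst x (by simpa using hx)
  refine ⟨m, hm, T.dist_eq_add_of_support_inter (hp.takeUntil hm) hr.reverse ?_,
    T.dist_eq_add_of_support_inter (hp.dropUntil hm).reverse hr.reverse ?_⟩
  · exact fun x hx hx' => hfirst' x hx' (p.support_takeUntil_subset_support hm hx)
  · intro x hx hx'
    rw [Walk.support_reverse, List.mem_reverse] at hx
    exact hfirst' x hx' (p.support_dropUntil_subset_support hm hx)

theorem dist_add_dist_le_max_of_mem_support {u v m n : α} {p : T.g.Walk u v} (hp : p.IsPath)
    (hm : m ∈ p.support) (hn : n ∈ p.support) :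
    T.dist u v + T.dist m n ≤ max (T.dist u m + T.dist v n) (T.dist u n + T.dist v m) := by
  classical
  have hum := T.dist_add_dist_of_mem_support hp hm
  have hun := T.dist_add_dist_of_mem_support hp hn
  have := T.dist_comm v m
  have := T.dist_comm v n
  rw [← p.take_spec hm, Walk.mem_support_append_iff] at hn
  rcases hn with hn | hn
  · have := T.dist_add_dist_of_mem_support (hp.takeUntil hm) hn
    have := T.dist_comm m n
    exact le_max_of_le_left (by linarith)
  · have := T.dist_add_dist_of_mem_support (hp.dropUntil hm) hn
    exact le_max_of_le_right (by linarith)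

theorem dist_add_dist_le_max (a b c d : α) :
    T.dist a b + T.dist c d ≤ max (T.dist a c + T.dist b d) (T.dist a d + T.dist b c) := by
  obtain ⟨p, hp⟩ := (T.isTree.existsUnique_path a b).exists
  obtain ⟨m, hm, hac, hbc⟩ := T.exists_projection hp c
  obtain ⟨n, hn, had, hbd⟩ := T.exists_projection hp d
  have hcd : T.dist c d ≤ T.dist m c + T.dist m n + T.dist n d := by
    linarith [T.dist_triangle c m d, T.dist_triangle m n d, T.dist_comm c m]
  calc T.dist a b + T.dist c d
      ≤ T.dist a b + T.dist m n + (T.dist m c + T.dist n d) := by linarith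
    _ ≤ max (T.dist a m + T.dist b n) (T.dist a n + T.dist b m) + (T.dist m c + T.dist n d) := by
        gcongr
        exact T.dist_add_dist_le_max_of_mem_support hp hm hn
    _ = _ := by rw [hac, hbc, had, hbd, ← max_add_add_right]; congr 1 <;> ring

end WTree

theorem forbidden_2K2_a : ¬ ∃ (β : Type) (T : WTree β) (a b c d : β) (dmin dmax : ℝ),
    T.IsLeaf a ∧ T.IsLeaf b ∧ T.IsLeaf c ∧ T.IsLeaf d ∧
    a ≠ b ∧ a ≠ c ∧ a ≠ d ∧ b ≠ c ∧ b ≠ d ∧ c ≠ d ∧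
    0 ≤ dmin ∧ dmin ≤ dmax ∧
    dmin ≤ T.dist a b ∧ T.dist a b ≤ dmax ∧
    dmin ≤ T.dist c d ∧ T.dist c d ≤ dmax ∧
    T.dist a c < dmin ∧ T.dist a d < dmin ∧
    T.dist b c < dmin ∧ T.dist b d < dmin := by
  rintro ⟨β, T, a, b, c, d, dmin, dmax, -, -, -, -, -, -, -, -, -, -, -, -,
    hab, -, hcd, -, hac, had, hbc, hbd⟩
  rcases le_max_iff.mp (T.dist_add_dist_le_max a b c d) with h | h <;> linarith
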